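/- Let d ≥ 1 and r ≥ 1 be a real number. For all vectors a, b ∈ ℝ^d, one has ⟨|a|^{r-1} a − |b|^{r-1} b, a − b⟩ ≥ (1/2) |a|^{r-1} |a − b|² + (1/2) |b|^{r-1} |a − b|², where |·| denotes the Euclidean norm and ⟨·,·⟩ the Euclidean inner product. -/
import Mathlib


open Real
open scoped RealInnerProductSpace

theorem monotonicity_pointwise (d : ℕ) (hd : 1 ≤ d) (r : ℝ) (hr : 1 ≤ r)
    (a b : EuclideanSpace ℝ (Fin d)) :
    ⟪(‖a‖ ^ (r - 1)) • a - (‖b‖ ^ (r - 1)) • b, a - b⟫ ≥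
      (1 / 2) * ‖a‖ ^ (r - 1) * ‖a - b‖ ^ 2 + (1 / 2) * ‖b‖ ^ (r - 1) * ‖a - b‖ ^ 2 := by
  set α := ‖a‖ ^ (r - 1) with hα
  set β := ‖b‖ ^ (r - 1) with hβ
  have hkey : (α - β) * (‖a‖ ^ 2 - ‖b‖ ^ 2) ≥ 0 := by
    rcases le_total ‖a‖ ‖b‖ with h | h
    · have h1 : α ≤ β := Real.rpow_le_rpow (norm_nonneg a) h (by linarith)
      have h2 : ‖a‖ ^ 2 ≤ ‖b‖ ^ 2 := pow_le_pow_left₀ (norm_nonneg a) h 2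
      nlinarith
    · have h1 : β ≤ α := Real.rpow_le_rpow (norm_nonneg b) h (by linarith)
      have h2 : ‖b‖ ^ 2 ≤ ‖a‖ ^ 2 := by
        exact pow_le_pow_left₀ (norm_nonneg b) h 2
      nlinarith
  have hab : ‖a - b‖ ^ 2 = ‖a‖ ^ 2 - 2 * ⟪a, b⟫ + ‖b‖ ^ 2 := norm_sub_sq_real a b
  have hexp : ⟪(α : ℝ) • a - β • b, a - b⟫ =
      α * ‖a‖ ^ 2 - (α + β) * ⟪a, b⟫ + β * ‖b‖ ^ 2 := by
    rw [inner_sub_left, inner_sub_right, inner_sub_right, real_inner_smul_left,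
      real_inner_smul_left, real_inner_smul_left, real_inner_smul_left,
      real_inner_self_eq_norm_sq, real_inner_self_eq_norm_sq, real_inner_comm b a]
    ring
  rw [hexp, hab]
  nlinarith [hkey]
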